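/- Let G = (V, E) be a finite connected graph with symmetric edge set E. Let g : V → ℝ satisfy Σ_{x∈V} g(x) = 0. Then there exists an antisymmetric function J : E → ℝ with div J(x) := Σ_{y∼x} J(x,y) = g(x) for all x ∈ V, and max_{(x,y)∈E} |J(x,y)| ≤ (1/2)·Σ_{x∈V} |g(x)|. -/

import Mathlib

/-!
Split `g = g⁺ - g⁻`; both parts have mass `N = (1/2) ∑ |g|`. Route the amount `g⁺ a * g⁻ b / N`
from `a` to `b` along a simple path. A simple path carries at most a unit of flow through each
edge, so the superposition is bounded by the total routed mass `N`, and its divergence is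
`g⁺ - g⁻ = g` because the product coupling has marginals `g⁺` and `g⁻`.
-/

open Finset

namespace SimpleGraph

variable {V : Type*} {G : SimpleGraph V}

variable (G) in
def flowSpace : Submodule ℝ (V → V → ℝ) where
  carrier := {J | (∀ x y, J x y = -J y x) ∧ ∀ x y, ¬G.Adj x y → J x y = 0}
  add_mem' := by
    rintro J K ⟨hJ, hJG⟩ ⟨hK, hKG⟩
    refine ⟨fun x y => ?_, fun x y hxy => ?_⟩
    · simp only [Pi.add_apply, hJ x y, hK x y]; ring
    · simp [hJG x y hxy, hKG x y hxy]
  zero_mem' := by simp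
  smul_mem' := by
    rintro c J ⟨hJ, hJG⟩
    refine ⟨fun x y => ?_, fun x y hxy => ?_⟩
    · simp [hJ x y]
    · simp [hJG x y hxy]

section DartFlow

variable [DecidableEq V] {u v x y : V}

def dartFlow (u v : V) : V → V → ℝ :=
  fun x y => if x = u ∧ y = v then 1 else if x = v ∧ y = u then -1 else 0

lemma dartFlow_mem_flowSpace (h : G.Adj u v) : dartFlow u v ∈ G.flowSpace := by
  have huv := G.ne_of_adj h
  refine ⟨fun x y => ?_, fun x y hxy => ?_⟩
  · unfold dartFlow; split_ifs <;> simp_all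
  · unfold dartFlow
    split_ifs with h₁ h₂
    · exact absurd (h₁.1 ▸ h₁.2 ▸ h) hxy
    · exact absurd (h₂.1 ▸ h₂.2 ▸ h.symm) hxy
    · rfl

lemma abs_dartFlow_le_one : |dartFlow u v x y| ≤ 1 := by
  unfold dartFlow; split_ifs <;> norm_num

lemma dartFlow_eq_zero_of_ne_of_ne (hu : x ≠ u) (hv : x ≠ v) : dartFlow u v x y = 0 := by
  simp [dartFlow, hu, hv]

lemma dartFlow_eq_zero_of_ne_source (hx : x ≠ u) (hy : y ≠ u) : dartFlow u v x y = 0 := by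
  simp [dartFlow, hx, hy]

lemma sum_dartFlow [Fintype V] (huv : u ≠ v) (x : V) :
    ∑ y, dartFlow u v x y = (if x = u then 1 else 0) - (if x = v then 1 else 0) := by
  by_cases hu : x = u
  · subst hu; simp [dartFlow, huv]
  · by_cases hv : x = v
    · subst hv; simp [dartFlow, hu]
    · simp [dartFlow_eq_zero_of_ne_of_ne hu hv, hu, hv]

end DartFlow

namespace Walk

variable [DecidableEq V]

def flow : ∀ {a b : V}, G.Walk a b → V → V → ℝ
  | _, _, nil => 0
  | _, _, cons (u := u) (v := v) _ p => dartFlow u v + p.flow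

lemma flow_mem_flowSpace {a b : V} (p : G.Walk a b) : p.flow ∈ G.flowSpace := by
  induction p with
  | nil => exact G.flowSpace.zero_mem
  | cons h p ih => exact G.flowSpace.add_mem (dartFlow_mem_flowSpace h) ih

lemma sum_flow [Fintype V] {a b : V} (p : G.Walk a b) (x : V) :
    ∑ y, p.flow x y = (if x = a then 1 else 0) - (if x = b then 1 else 0) := by
  induction p with
  | nil => simp [flow]
  | cons h p ih =>
    simp only [flow, Pi.add_apply, sum_add_distrib, ih, sum_dartFlow (G.ne_of_adj h)]
    ring

lemma flow_eq_zero_of_notMem_support {a b x : V} (p : G.Walk a b) (hx : x ∉ p.support)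
    (y : V) : p.flow x y = 0 := by
  induction p with
  | nil => simp [flow]
  | cons h p ih =>
    simp only [support_cons, List.mem_cons, not_or] at hx
    simp only [flow, Pi.add_apply, ih hx.2, add_zero]
    exact dartFlow_eq_zero_of_ne_of_ne hx.1 fun hv => hx.2 (hv ▸ p.start_mem_support)

/-- The rest of a path avoids its first vertex, so the first dart's flow never overlaps it. -/
lemma IsPath.abs_flow_le_one {a b : V} {p : G.Walk a b} (hp : p.IsPath) (x y : V) :
    |p.flow x y| ≤ 1 := by
  induction p with
  | nil => simp [flow]
  | @cons u v w h p ih =>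
    obtain ⟨hp, hu⟩ := (cons_isPath_iff h p).mp hp
    simp only [flow, Pi.add_apply]
    by_cases hx : x = u
    · rw [p.flow_eq_zero_of_notMem_support (hx ▸ hu), add_zero]
      exact abs_dartFlow_le_one
    by_cases hy : y = u
    · rw [(p.flow_mem_flowSpace).1, p.flow_eq_zero_of_notMem_support (hy ▸ hu), neg_zero,
        add_zero]
      exact abs_dartFlow_le_one
    rw [dartFlow_eq_zero_of_ne_source hx hy, zero_add]
    exact ih hp

end Walk

theorem Preconnected.exists_flow [Fintype V] (hG : G.Preconnected) {w : V → V → ℝ}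
    (hw : ∀ a b, 0 ≤ w a b) :
    ∃ J ∈ G.flowSpace, (∀ x, ∑ y, J x y = ∑ b, w x b - ∑ a, w a x) ∧
      ∀ x y, |J x y| ≤ ∑ a, ∑ b, w a b := by
  classical
  choose P hP using hG.exists_isPath
  have hJ (x y : V) : (∑ a, ∑ b, w a b • (P a b).flow) x y
      = ∑ a, ∑ b, w a b * (P a b).flow x y := by
    simp only [Finset.sum_apply, Pi.smul_apply, smul_eq_mul]
  refine ⟨∑ a, ∑ b, w a b • (P a b).flow,
    sum_mem fun a _ => sum_mem fun b _ => Submodule.smul_mem _ _ (P a b).flow_mem_flowSpace,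
    fun x => ?_, fun x y => ?_⟩
  · calc ∑ y, (∑ a, ∑ b, w a b • (P a b).flow) x y
        = ∑ a, ∑ b, w a b * ∑ y, (P a b).flow x y := by
          simp only [hJ, mul_sum]
          rw [sum_comm]
          exact sum_congr rfl fun a _ => sum_comm
      _ = ∑ b, w x b - ∑ a, w a x := by
          simp only [Walk.sum_flow, mul_sub, mul_ite, mul_one, mul_zero, sum_sub_distrib,
            sum_ite_eq, mem_univ, if_true]
          rw [sum_comm]
          simp
  · calc |(∑ a, ∑ b, w a b • (P a b).flow) x y|
        ≤ ∑ a, ∑ b, |w a b * (P a b).flow x y| := by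
          rw [hJ]
          exact (abs_sum_le_sum_abs _ _).trans (sum_le_sum fun a _ => abs_sum_le_sum_abs _ _)
      _ ≤ ∑ a, ∑ b, w a b := by
          gcongr with a _ b _
          rw [abs_mul, abs_of_nonneg (hw a b)]
          exact mul_le_of_le_one_right (hw a b) ((hP a b).abs_flow_le_one x y)

end SimpleGraph

/-- Witnessed by the product coupling `μ a * ν b / ∑ μ`. -/
lemma exists_coupling_of_sum_eq {ι : Type*} [Fintype ι] {μ ν : ι → ℝ} (hμ : ∀ a, 0 ≤ μ a)
    (hν : ∀ b, 0 ≤ ν b) (hmass : ∑ a, μ a = ∑ b, ν b) :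
    ∃ w : ι → ι → ℝ, (∀ a b, 0 ≤ w a b) ∧ (∀ a, ∑ b, w a b = μ a) ∧
      (∀ b, ∑ a, w a b = ν b) ∧ ∑ a, ∑ b, w a b = ∑ a, μ a := by
  set N := ∑ a, μ a
  have hcancel {f : ι → ℝ} (hf : ∀ a, 0 ≤ f a) (hfN : ∑ a, f a = N) (a : ι) :
      f a * N / N = f a := by
    rcases eq_or_ne N 0 with hN | hN
    · have := (sum_eq_zero_iff_of_nonneg fun a _ => hf a).mp (hfN.trans hN) a (mem_univ a)
      simp [this]
    · exact mul_div_cancel_right₀ _ hN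
  refine ⟨fun a b => μ a * ν b / N, fun a b => div_nonneg (mul_nonneg (hμ a) (hν b)) (sum_nonneg fun a _ => hμ a), fun a => ?_, fun b => ?_, ?_⟩
  · rw [← sum_div, ← mul_sum, ← hmass, hcancel hμ rfl]
  · rw [← sum_div, ← sum_mul, mul_comm, hcancel hν hmass.symm]
  · simp_rw [← sum_div, ← mul_sum, ← sum_mul, ← hmass]
    exact mul_self_div_self N

/-- on a finite connected graph, any `g : V → ℝ` of zero total mass is the
divergence of an antisymmetric vector field `J` supported on edges, with
`|J(x,y)| ≤ (1/2)·Σ_x |g(x)|`. -/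
theorem stmt8 {V : Type*} [Fintype V] (G : SimpleGraph V) (hconn : G.Connected)
    (g : V → ℝ) (hg : ∑ x, g x = 0) :
    ∃ J : V → V → ℝ,
      (∀ x y, J x y = - J y x) ∧
      (∀ x y, ¬ G.Adj x y → J x y = 0) ∧
      (∀ x, ∑ y, J x y = g x) ∧
      (∀ x y, |J x y| ≤ (1 / 2) * ∑ x, |g x|) := by
  have hsplit : ∑ x, (g x)⁺ - ∑ x, (g x)⁻ = 0 := by
    simp [← sum_sub_distrib, posPart_sub_negPart, hg]
  have hmass : ∑ x, (g x)⁺ + ∑ x, (g x)⁻ = ∑ x, |g x| := by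
    simp [← sum_add_distrib, posPart_add_negPart]
  obtain ⟨w, hw, hrow, hcol, htotal⟩ := exists_coupling_of_sum_eq
    (fun x => posPart_nonneg (g x)) (fun x => negPart_nonneg (g x)) (sub_eq_zero.mp hsplit)
  obtain ⟨J, ⟨hanti, hsupp⟩, hdiv, hbound⟩ := hconn.preconnected.exists_flow hw
  refine ⟨J, hanti, hsupp, fun x => ?_, fun x y => ?_⟩
  · rw [hdiv, hrow, hcol, posPart_sub_negPart]
  · rw [← hmass]
    linarith [hbound x y]
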